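/- arXiv:1804.04396 — 2 statements merged into one kernel-verified Lean document; each statement's English description precedes it below -/
import Mathlib

section
/- As p decreases to p_c, the second-order expansion (1/2)p²m₂(1 − q_p) = (p m₁ − 1) + (1/6)p³m₃(1 − q_p)² + o((1 − q_p)²) holds; equivalently, [(1/2)p²m₂(1 − q_p) − (p m₁ − 1) − (1/6)p³m₃(1 − q_p)²]/(1 − q_p)² → 0 as p → p_c from the right. -/
open Filter Set Topology
open scoped Topology

/-- The probability generating function `f(s) = ∑ₖ aₖ sᵏ` of a distribution `a` on ℕ. -/
noncomputable def pgf (a : ℕ → ℝ) (s : ℝ) : ℝ := ∑' n, a n * s ^ n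

/-- The generating function `f_p(s) = f(ps + 1 - p)` of the binomially `p`-thinned
(percolated) offspring distribution. -/
noncomputable def pgfp (a : ℕ → ℝ) (p s : ℝ) : ℝ := pgf a (p * s + 1 - p)

lemma bonf (u : ℝ) (hu0 : 0 ≤ u) (hu1 : u ≤ 1) (k : ℕ) :
    (1 - k*u ≤ (1-u)^k) ∧ ((1-u)^k ≤ 1 - k*u + k*(k-1)/2*u^2) ∧
    (1 - k*u + k*(k-1)/2*u^2 - k*(k-1)*(k-2)/6*u^3 ≤ (1-u)^k) ∧
    ((1-u)^k ≤ 1 - k*u + k*(k-1)/2*u^2 - k*(k-1)*(k-2)/6*u^3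
        + k*(k-1)*(k-2)*(k-3)/24*u^4) := by
  induction k with
  | zero => norm_num
  | succ k ih =>
    obtain ⟨hA, hB, hC, hD⟩ := ih
    have h1u : (0:ℝ) ≤ 1 - u := by linarith
    have hp0 : (0:ℝ) ≤ (1-u)^k := pow_nonneg h1u k
    have hp1 : (1-u)^k ≤ 1 := pow_le_one₀ h1u (by linarith)
    have hrw : (1-u)^(k+1) = (1-u)^k - u*(1-u)^k := by ring
    have hmA := mul_le_mul_of_nonneg_left hA hu0
    have hmB := mul_le_mul_of_nonneg_left hB hu0
    have hmC := mul_le_mul_of_nonneg_left hC hu0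
    have hm1 := mul_le_mul_of_nonneg_left hp1 hu0
    have hm0 : 0 ≤ u * (1-u)^k := mul_nonneg hu0 hp0
    push_cast
    refine ⟨by nlinarith, by nlinarith, by nlinarith, by nlinarith⟩
lemma pow_sub_le (x y : ℝ) (hx : 0 ≤ x) (hxy : x ≤ y) (hy : y ≤ 1) (k : ℕ) :
    y^k - x^k ≤ k*(y-x) := by
  induction k with
  | zero => norm_num
  | succ k ih =>
    have h1 : x^k ≤ y^k := pow_le_pow_left₀ hx hxy k
    have h2 : y^k ≤ 1 := pow_le_one₀ (le_trans hx hxy) hy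
    have h3 : x^k ≤ 1 := le_trans h1 h2
    have h4 : 0 ≤ x^k := pow_nonneg hx k
    rw [pow_succ, pow_succ]
    push_cast
    nlinarith [mul_le_mul_of_nonneg_right hy (sub_nonneg.2 h1),
      mul_le_mul_of_nonneg_right h3 (sub_nonneg.2 hxy)]

lemma pgf_summable {a : ℕ → ℝ} (ha0 : ∀ k, 0 ≤ a k) (hs : Summable a)
    {s : ℝ} (hs0 : 0 ≤ s) (hs1 : s ≤ 1) : Summable (fun k => a k * s ^ k) :=
  Summable.of_nonneg_of_le (fun k => mul_nonneg (ha0 k) (pow_nonneg hs0 k))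
    (fun k => mul_le_of_le_one_right (ha0 k) (pow_le_one₀ hs0 hs1)) hs

lemma pgf_one {a : ℕ → ℝ} (ha1 : HasSum a 1) : pgf a 1 = 1 := by
  unfold pgf; simp only [one_pow, mul_one]; exact ha1.tsum_eq

lemma pgf_hasSum {a : ℕ → ℝ} (ha0 : ∀ k, 0 ≤ a k) (hs : Summable a)
    {s : ℝ} (hs0 : 0 ≤ s) (hs1 : s ≤ 1) :
    HasSum (fun k => a k * s ^ k) (pgf a s) :=
  (pgf_summable ha0 hs hs0 hs1).hasSum

lemma pgf_convex {a : ℕ → ℝ} (ha0 : ∀ k, 0 ≤ a k) (hs : Summable a)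
    {x y t : ℝ} (hx0 : 0 ≤ x) (hx1 : x ≤ 1) (hy0 : 0 ≤ y) (hy1 : y ≤ 1)
    (ht0 : 0 ≤ t) (ht1 : t ≤ 1) :
    pgf a (t*x+(1-t)*y) ≤ t * pgf a x + (1-t) * pgf a y := by
  have hz0 : 0 ≤ t*x+(1-t)*y := by nlinarith
  have hz1 : t*x+(1-t)*y ≤ 1 := by nlinarith
  have hL := pgf_hasSum ha0 hs hz0 hz1
  have hR := ((pgf_hasSum ha0 hs hx0 hx1).mul_left t).add
    ((pgf_hasSum ha0 hs hy0 hy1).mul_left (1-t))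
  refine hasSum_le (fun k => ?_) hL hR
  have := (convexOn_pow k).2 (Set.mem_Ici.2 hx0) (Set.mem_Ici.2 hy0) ht0
    (by linarith : (0:ℝ) ≤ 1 - t) (by ring)
  simp only [smul_eq_mul] at this
  calc a k * (t*x+(1-t)*y)^k ≤ a k * (t * x^k + (1-t)*y^k) :=
        mul_le_mul_of_nonneg_left this (ha0 k)
    _ = t * (a k * x^k) + (1-t) * (a k * y^k) := by ring

lemma pgf_diff_le {a : ℕ → ℝ} {m₁ : ℝ} (ha0 : ∀ k, 0 ≤ a k) (hs : Summable a)
    (hm1 : HasSum (fun k : ℕ => (k:ℝ) * a k) m₁)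
    {x y : ℝ} (hx0 : 0 ≤ x) (hxy : x ≤ y) (hy1 : y ≤ 1) :
    pgf a y - pgf a x ≤ m₁ * (y - x) := by
  have hx1 : x ≤ 1 := le_trans hxy hy1
  have hy0 : 0 ≤ y := le_trans hx0 hxy
  have hL := (pgf_hasSum ha0 hs hy0 hy1).sub (pgf_hasSum ha0 hs hx0 hx1)
  have hR := hm1.mul_right (y - x)
  refine hasSum_le (fun k => ?_) hL hR
  have h := pow_sub_le x y hx0 hxy hy1 k
  calc a k * y^k - a k * x^k = a k * (y^k - x^k) := by ring
    _ ≤ a k * (k*(y-x)) := mul_le_mul_of_nonneg_left h (ha0 k)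
    _ = (k:ℝ) * a k * (y-x) := by ring

lemma exists_two_le {a : ℕ → ℝ} {m₁ : ℝ} (ha0 : ∀ k, 0 ≤ a k) (ha1 : HasSum a 1)
    (hm1 : HasSum (fun k : ℕ => (k:ℝ) * a k) m₁) (h1m : 1 < m₁) :
    ∃ K, 2 ≤ K ∧ 0 < a K := by
  by_contra h
  push_neg at h
  have hz : ∀ K, 2 ≤ K → a K = 0 := fun K hK => le_antisymm (h K hK) (ha0 K)
  have : m₁ ≤ 1 := by
    refine hasSum_le (fun k => ?_) hm1 ha1
    match k with
    | 0 => simpa using ha0 0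
    | 1 => simp
    | (n+2) => simp [hz (n+2) (by omega)]
  linarith

lemma one_sub_pgf_lt {a : ℕ → ℝ} {m₁ : ℝ} (ha0 : ∀ k, 0 ≤ a k) (ha1 : HasSum a 1)
    (hm1 : HasSum (fun k : ℕ => (k:ℝ) * a k) m₁) (h1m : 1 < m₁)
    {x : ℝ} (hx0 : 0 ≤ x) (hx1 : x < 1) :
    1 - pgf a x < m₁ * (1 - x) := by
  obtain ⟨K, hK2, hKpos⟩ := exists_two_le ha0 ha1 hm1 h1m
  have hL := ha1.sub (pgf_hasSum ha0 ha1.summable hx0 hx1.le)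
  have hR := hm1.mul_right (1 - x)
  refine hasSum_lt (i := K) (fun k => ?_) ?_ hL hR
  · have h := pow_sub_le x 1 hx0 hx1.le le_rfl k
    simp only [one_pow] at h
    calc a k - a k * x^k = a k * (1 - x^k) := by ring
      _ ≤ a k * (k*(1-x)) := mul_le_mul_of_nonneg_left h (ha0 k)
      _ = (k:ℝ) * a k * (1-x) := by ring
  · have hgeom : 1 - x^K = (∑ i ∈ Finset.range K, x^i) * (1 - x) := by
      have := geom_sum_mul x K
      nlinarith [this]
    have hsumlt : (∑ i ∈ Finset.range K, x^i) < K := by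
      have : ∀ i ∈ Finset.range K, x^i ≤ 1 := fun i _ => pow_le_one₀ hx0 hx1.le
      calc (∑ i ∈ Finset.range K, x^i) < ∑ i ∈ Finset.range K, (1:ℝ) := by
            refine Finset.sum_lt_sum this ⟨1, Finset.mem_range.2 (by omega), by
              simpa using hx1⟩
        _ = K := by simp
    have hxk : 1 - x^K < K * (1-x) := by
      rw [hgeom]
      have h1x : 0 < 1 - x := by linarith
      exact (mul_lt_mul_of_pos_right hsumlt h1x)
    calc a K - a K * x^K = a K * (1 - x^K) := by ring
      _ < a K * (K*(1-x)) := mul_lt_mul_of_pos_left hxk hKpos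
      _ = (K:ℝ) * a K * (1-x) := by ring

set_option maxHeartbeats 1600000 in
lemma q_tendsto {a : ℕ → ℝ} {m₁ pc : ℝ} {q : ℝ → ℝ}
    (ha0 : ∀ k, 0 ≤ a k) (ha1 : HasSum a 1)
    (hm1 : HasSum (fun k : ℕ => (k:ℝ) * a k) m₁) (h1m : 1 < m₁)
    (hpc : pc = 1 / m₁)
    (hq : ∀ p ∈ Set.Ioc pc 1, q p ∈ Set.Ico (0 : ℝ) 1 ∧ pgfp a p (q p) = q p) :
    Tendsto q (𝓝[>] pc) (𝓝 1) := by
  have hm0 : 0 < m₁ := by linarith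
  have hpc0 : 0 < pc := by rw [hpc]; positivity
  have hpc1 : pc < 1 := by rw [hpc]; rw [div_lt_one hm0]; exact h1m
  have hpcm : pc * m₁ = 1 := by rw [hpc, one_div, inv_mul_cancel₀ hm0.ne']
  rw [Metric.tendsto_nhds]
  intro ε hε
  obtain ⟨s₀, hs₀0, hs₀1, hs₀ε⟩ : ∃ s₀ : ℝ, 0 ≤ s₀ ∧ s₀ < 1 ∧ 1 - ε/2 ≤ s₀ :=
    ⟨max 0 (1 - ε/2), le_max_left _ _, max_lt (by linarith) (by linarith),
      le_max_right _ _⟩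
  have hx₀0 : 0 ≤ pc * s₀ + 1 - pc := by nlinarith
  have hx₀1 : pc * s₀ + 1 - pc < 1 := by nlinarith
  have hkey : s₀ < pgf a (pc * s₀ + 1 - pc) := by
    have h := one_sub_pgf_lt ha0 ha1 hm1 h1m hx₀0 hx₀1
    have heq : m₁ * (1 - (pc * s₀ + 1 - pc)) = 1 - s₀ := by
      have : m₁ * (1 - (pc * s₀ + 1 - pc)) = (pc * m₁) * (1 - s₀) := by ring
      rw [this, hpcm]; ring
    linarith [h, heq.le]
  obtain ⟨δ, hδ, hδdef⟩ : ∃ δ : ℝ, 0 < δ ∧ pgf a (pc * s₀ + 1 - pc) = s₀ + δ :=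
    ⟨pgf a (pc * s₀ + 1 - pc) - s₀, by linarith, by ring⟩
  have hden : 0 < m₁*(1-s₀)+1 := by nlinarith
  have hpcc : pc < min 1 (pc + δ/(m₁*(1-s₀)+1)) := by
    apply lt_min hpc1
    have : 0 < δ/(m₁*(1-s₀)+1) := div_pos hδ hden
    linarith
  filter_upwards [Ioo_mem_nhdsGT_of_mem (Set.mem_Ico.2 ⟨le_rfl, hpcc⟩)] with p hp
  obtain ⟨hp1, hp2⟩ := hp
  have hple : p ≤ 1 := le_of_lt (lt_of_lt_of_le hp2 (min_le_left _ _))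
  obtain ⟨⟨hq0, hq1⟩, hfix⟩ := hq p ⟨hp1, hple⟩
  have hp0 : 0 < p := lt_trans hpc0 hp1
  have hclaim : s₀ < q p := by
    by_contra hle
    push_neg at hle
    have hd : 0 < 1 - q p := by linarith
    obtain ⟨t, htdef⟩ : ∃ t : ℝ, t = (1-s₀)/(1-q p) := ⟨_, rfl⟩
    have ht0 : 0 ≤ t := htdef ▸ div_nonneg (by linarith) hd.le
    have ht1 : t ≤ 1 := by
      rw [htdef, div_le_one hd]; linarith
    have htq : t * (1 - q p) = 1 - s₀ := by
      rw [htdef]; field_simp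
    have hs₀eq : t * q p + (1-t) * 1 = s₀ := by nlinarith [htq]
    have hxq0 : 0 ≤ p * q p + 1 - p := by nlinarith [mul_nonneg hp0.le hq0]
    have hxq1 : p * q p + 1 - p ≤ 1 := by nlinarith [mul_nonneg hp0.le hd.le]
    have hxeq : t * (p * q p + 1 - p) + (1-t) * 1 = p * s₀ + 1 - p := by
      nlinarith [htq, hs₀eq]
    have hconv := pgf_convex ha0 ha1.summable hxq0 hxq1 zero_le_one le_rfl ht0 ht1
    rw [hxeq] at hconv
    have hfix' : pgf a (p * q p + 1 - p) = q p := hfix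
    rw [hfix', pgf_one ha1, hs₀eq] at hconv
    -- hconv : pgf a (p*s₀+1-p) ≤ s₀
    have hx0' : 0 ≤ p*s₀+1-p := by nlinarith [mul_nonneg hp0.le hs₀0]
    have hxle : p*s₀+1-p ≤ pc * s₀ + 1 - pc := by nlinarith
    have hlip := pgf_diff_le ha0 ha1.summable hm1 hx0' hxle hx₀1.le
    have hgap : m₁ * ((pc * s₀ + 1 - pc) - (p*s₀+1-p)) < δ := by
      have hxx : (pc * s₀ + 1 - pc) - (p*s₀+1-p) = (p - pc)*(1-s₀) := by ring
      rw [hxx]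
      have hpp : p - pc < δ/(m₁*(1-s₀)+1) := by
        have := lt_of_lt_of_le hp2 (min_le_right _ _)
        linarith
      have h1 : 0 < 1 - s₀ := by linarith
      have h3 : m₁ * (δ/(m₁*(1-s₀)+1)) * (1-s₀) < δ := by
        have he : m₁ * (δ/(m₁*(1-s₀)+1)) * (1-s₀)
            = δ * (m₁*(1-s₀)) / (m₁*(1-s₀)+1) := by ring
        rw [he, div_lt_iff₀ hden]
        nlinarith
      nlinarith
    linarith
  have : 1 - q p < ε := by linarith
  rw [Real.dist_eq, abs_sub_lt_iff]
  constructor <;> linarith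

noncomputable def Rfun (a : ℕ → ℝ) (u : ℝ) : ℝ :=
  ∑' k, a k * ((1-u)^k -
    (1 - k*u + k*(k-1)/2*u^2 - k*(k-1)*(k-2)/6*u^3))

section Rlem
variable {a : ℕ → ℝ} {m₁ m₂ m₃ : ℝ}

lemma summable_b3 (hm3 : HasSum (fun k : ℕ => (k : ℝ) * ((k : ℝ) - 1) * ((k : ℝ) - 2) * a k) m₃) :
    Summable (fun k : ℕ => a k * ((k:ℝ)*((k:ℝ)-1)*((k:ℝ)-2)/6)) :=
  (hm3.summable.div_const 6).congr (fun k => by ring)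

lemma term_nonneg (ha0 : ∀ k, 0 ≤ a k) {u : ℝ} (hu0 : 0 ≤ u) (hu1 : u ≤ 1) (k : ℕ) :
    0 ≤ a k * ((1-u)^k - (1 - k*u + k*(k-1)/2*u^2 - k*(k-1)*(k-2)/6*u^3)) :=
  mul_nonneg (ha0 k) (by linarith [(bonf u hu0 hu1 k).2.2.1])

lemma term_le_b3 (ha0 : ∀ k, 0 ≤ a k) {u : ℝ} (hu0 : 0 ≤ u) (hu1 : u ≤ 1) (k : ℕ) :
    a k * ((1-u)^k - (1 - k*u + k*(k-1)/2*u^2 - k*(k-1)*(k-2)/6*u^3))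
      ≤ a k * ((k:ℝ)*((k:ℝ)-1)*((k:ℝ)-2)/6) * u^3 := by
  have h := (bonf u hu0 hu1 k).2.1
  have : (1-u)^k - (1 - k*u + k*(k-1)/2*u^2 - k*(k-1)*(k-2)/6*u^3)
      ≤ (k:ℝ)*((k:ℝ)-1)*((k:ℝ)-2)/6 * u^3 := by linarith
  calc a k * ((1-u)^k - (1 - k*u + k*(k-1)/2*u^2 - k*(k-1)*(k-2)/6*u^3))
      ≤ a k * ((k:ℝ)*((k:ℝ)-1)*((k:ℝ)-2)/6 * u^3) :=
        mul_le_mul_of_nonneg_left this (ha0 k)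
    _ = a k * ((k:ℝ)*((k:ℝ)-1)*((k:ℝ)-2)/6) * u^3 := by ring

lemma term_le_b4 (ha0 : ∀ k, 0 ≤ a k) {u : ℝ} (hu0 : 0 ≤ u) (hu1 : u ≤ 1) (k : ℕ) :
    a k * ((1-u)^k - (1 - k*u + k*(k-1)/2*u^2 - k*(k-1)*(k-2)/6*u^3))
      ≤ a k * ((k:ℝ)*((k:ℝ)-1)*((k:ℝ)-2)*((k:ℝ)-3)/24) * u^4 := by
  have h := (bonf u hu0 hu1 k).2.2.2
  have : (1-u)^k - (1 - k*u + k*(k-1)/2*u^2 - k*(k-1)*(k-2)/6*u^3)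
      ≤ (k:ℝ)*((k:ℝ)-1)*((k:ℝ)-2)*((k:ℝ)-3)/24 * u^4 := by linarith
  calc a k * ((1-u)^k - (1 - k*u + k*(k-1)/2*u^2 - k*(k-1)*(k-2)/6*u^3))
      ≤ a k * ((k:ℝ)*((k:ℝ)-1)*((k:ℝ)-2)*((k:ℝ)-3)/24 * u^4) :=
        mul_le_mul_of_nonneg_left this (ha0 k)
    _ = _ := by ring

lemma summable_term (ha0 : ∀ k, 0 ≤ a k)
    (hm3 : HasSum (fun k : ℕ => (k : ℝ) * ((k : ℝ) - 1) * ((k : ℝ) - 2) * a k) m₃)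
    {u : ℝ} (hu0 : 0 ≤ u) (hu1 : u ≤ 1) :
    Summable (fun k => a k * ((1-u)^k -
      (1 - k*u + k*(k-1)/2*u^2 - k*(k-1)*(k-2)/6*u^3))) :=
  Summable.of_nonneg_of_le (term_nonneg ha0 hu0 hu1) (term_le_b3 ha0 hu0 hu1)
    ((summable_b3 hm3).mul_right (u^3))

lemma b4_nonneg (k : ℕ) : 0 ≤ (k:ℝ)*((k:ℝ)-1)*((k:ℝ)-2)*((k:ℝ)-3)/24 := by
  match k with
  | 0 => norm_num
  | 1 => norm_num
  | 2 => norm_num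
  | 3 => norm_num
  | (n+4) =>
    have h : (0:ℝ) ≤ (n:ℝ) := Nat.cast_nonneg n
    push_cast
    have h4 : (0:ℝ) ≤ (n:ℝ) + 4 := by linarith
    have h3 : (0:ℝ) ≤ (n:ℝ) + 4 - 1 := by linarith
    have h2 : (0:ℝ) ≤ (n:ℝ) + 4 - 2 := by linarith
    have h1 : (0:ℝ) ≤ (n:ℝ) + 4 - 3 := by linarith
    exact div_nonneg (mul_nonneg (mul_nonneg (mul_nonneg h4 h3) h2) h1) (by norm_num)

set_option maxHeartbeats 1600000 in
lemma Rfun_tendsto (ha0 : ∀ k, 0 ≤ a k)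
    (hm3 : HasSum (fun k : ℕ => (k : ℝ) * ((k : ℝ) - 1) * ((k : ℝ) - 2) * a k) m₃) :
    Tendsto (fun u => Rfun a u / u^3) (𝓝[>] (0:ℝ)) (𝓝 0) := by
  rw [Metric.tendsto_nhds]
  intro ε hε
  have hb3 := summable_b3 hm3
  have htail := tendsto_sum_nat_add (f := fun k : ℕ => a k * ((k:ℝ)*((k:ℝ)-1)*((k:ℝ)-2)/6))
  obtain ⟨N, hN⟩ := (htail.eventually (eventually_lt_nhds (by linarith : (0:ℝ) < ε/4))).exists
  obtain ⟨C, hC0, hCsum⟩ : ∃ C : ℝ, 0 < C ∧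
      ∑ k ∈ Finset.range N, a k * ((k:ℝ)*((k:ℝ)-1)*((k:ℝ)-2)*((k:ℝ)-3)/24) ≤ C := by
    refine ⟨∑ k ∈ Finset.range N, a k * ((k:ℝ)*((k:ℝ)-1)*((k:ℝ)-2)*((k:ℝ)-3)/24) + 1, ?_, by linarith⟩
    have : 0 ≤ ∑ k ∈ Finset.range N, a k * ((k:ℝ)*((k:ℝ)-1)*((k:ℝ)-2)*((k:ℝ)-3)/24) :=
      Finset.sum_nonneg (fun k _ => mul_nonneg (ha0 k) (b4_nonneg k))
    linarith
  have hmin : (0:ℝ) < min 1 (ε/(4*C)) := lt_min one_pos (by positivity)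
  filter_upwards [Ioo_mem_nhdsGT_of_mem (Set.mem_Ico.2 ⟨le_rfl, hmin⟩)] with u hu
  obtain ⟨hu0, hu2⟩ := hu
  have hu1 : u ≤ 1 := le_of_lt (lt_of_lt_of_le hu2 (min_le_left _ _))
  have huC : u < ε/(4*C) := lt_of_lt_of_le hu2 (min_le_right _ _)
  have hsum := summable_term ha0 hm3 hu0.le hu1
  have hsplit := Summable.sum_add_tsum_nat_add N hsum
  have hRnn : 0 ≤ Rfun a u := tsum_nonneg (term_nonneg ha0 hu0.le hu1)
  have hu3 : 0 < u^3 := by positivity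
  have hu4 : 0 ≤ u^4 := by positivity
  -- head bound
  have hhead : ∑ k ∈ Finset.range N, a k * ((1-u)^k -
      (1 - k*u + k*(k-1)/2*u^2 - k*(k-1)*(k-2)/6*u^3)) ≤ C * u^4 := by
    calc ∑ k ∈ Finset.range N, a k * ((1-u)^k -
          (1 - k*u + k*(k-1)/2*u^2 - k*(k-1)*(k-2)/6*u^3))
        ≤ ∑ k ∈ Finset.range N, a k * ((k:ℝ)*((k:ℝ)-1)*((k:ℝ)-2)*((k:ℝ)-3)/24) * u^4 :=
          Finset.sum_le_sum (fun k _ => term_le_b4 ha0 hu0.le hu1 k)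
      _ = (∑ k ∈ Finset.range N, a k * ((k:ℝ)*((k:ℝ)-1)*((k:ℝ)-2)*((k:ℝ)-3)/24)) * u^4 :=
          (Finset.sum_mul _ _ _).symm
      _ ≤ C * u^4 := mul_le_mul_of_nonneg_right hCsum hu4
  -- tail bound
  have htail2 : ∑' k, a (k+N) * ((1-u)^(k+N) -
      (1 - ((k+N:ℕ):ℝ)*u + ((k+N:ℕ):ℝ)*(((k+N:ℕ):ℝ) - 1)/2*u^2 - ((k+N:ℕ):ℝ)*(((k+N:ℕ):ℝ)-1)*(((k+N:ℕ):ℝ)-2)/6*u^3))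
      ≤ (ε/4) * u^3 := by
    have h1 : ∑' k, a (k+N) * ((1-u)^(k+N) -
        (1 - ((k+N:ℕ):ℝ)*u + ((k+N:ℕ):ℝ)*(((k+N:ℕ):ℝ) - 1)/2*u^2 - ((k+N:ℕ):ℝ)*(((k+N:ℕ):ℝ)-1)*(((k+N:ℕ):ℝ)-2)/6*u^3))
        ≤ ∑' k, a (k+N) * (((k+N:ℕ):ℝ)*(((k+N:ℕ):ℝ)-1)*(((k+N:ℕ):ℝ)-2)/6) * u^3 :=
      Summable.tsum_le_tsum (fun k => term_le_b3 ha0 hu0.le hu1 (k+N))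
        ((summable_nat_add_iff N).2 hsum)
        ((summable_nat_add_iff N).2 (hb3.mul_right (u^3)))
    have h2 : ∑' k, a (k+N) * (((k+N:ℕ):ℝ)*(((k+N:ℕ):ℝ)-1)*(((k+N:ℕ):ℝ)-2)/6) * u^3
        = (∑' k, a (k+N) * (((k+N:ℕ):ℝ)*(((k+N:ℕ):ℝ)-1)*(((k+N:ℕ):ℝ)-2)/6)) * u^3 :=
      tsum_mul_right
    have h3 := mul_le_mul_of_nonneg_right hN.le hu3.le
    calc _ ≤ _ := h1
      _ = _ := h2
      _ ≤ (ε/4) * u^3 := h3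
  have hR : Rfun a u ≤ C * u^4 + (ε/4) * u^3 := by
    have : Rfun a u = (∑ k ∈ Finset.range N, a k * ((1-u)^k -
        (1 - k*u + k*(k-1)/2*u^2 - k*(k-1)*(k-2)/6*u^3)))
        + ∑' k, a (k+N) * ((1-u)^(k+N) -
        (1 - ((k+N:ℕ):ℝ)*u + ((k+N:ℕ):ℝ)*(((k+N:ℕ):ℝ) - 1)/2*u^2 - ((k+N:ℕ):ℝ)*(((k+N:ℕ):ℝ)-1)*(((k+N:ℕ):ℝ)-2)/6*u^3)) :=
      hsplit.symm
    rw [this]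
    linarith
  have hCu : C * u ≤ ε/4 := by
    rw [lt_div_iff₀ (by positivity : (0:ℝ) < 4*C)] at huC
    nlinarith
  have hb : Rfun a u / u^3 < ε := by
    rw [div_lt_iff₀ hu3]
    have h1 : C * u^4 ≤ (ε/4) * u^3 := by
      calc C * u^4 = (C*u) * u^3 := by ring
        _ ≤ (ε/4) * u^3 := mul_le_mul_of_nonneg_right hCu hu3.le
    calc Rfun a u ≤ C * u^4 + (ε/4) * u^3 := hR
      _ ≤ (ε/4)*u^3 + (ε/4)*u^3 := by linarith
      _ = (ε/2) * u^3 := by ring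
      _ < ε * u^3 := by nlinarith
  rw [Real.dist_eq, sub_zero, abs_of_nonneg (div_nonneg hRnn (by positivity))]
  exact hb

end Rlem


set_option maxHeartbeats 1600000 in
/-- As `p ↓ p_c`, the second-order expansion
`(1/2)p²m₂(1 - q_p) = (p m₁ - 1) + (1/6)p³m₃(1 - q_p)² + o((1 - q_p)²)` holds. -/
theorem second_order_expansion_extinction_prob
    (a : ℕ → ℝ) (m₁ m₂ m₃ pc : ℝ) (q : ℝ → ℝ)
    (ha0 : ∀ k, 0 ≤ a k) (ha1 : HasSum a 1)
    (hm1 : HasSum (fun k : ℕ => (k : ℝ) * a k) m₁) (h1m : 1 < m₁)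
    (hm2 : HasSum (fun k : ℕ => (k : ℝ) * ((k : ℝ) - 1) * a k) m₂)
    (hm3 : HasSum (fun k : ℕ => (k : ℝ) * ((k : ℝ) - 1) * ((k : ℝ) - 2) * a k) m₃)
    (hpc : pc = 1 / m₁)
    (hq : ∀ p ∈ Set.Ioc pc 1, q p ∈ Set.Ico (0 : ℝ) 1 ∧ pgfp a p (q p) = q p) :
    Tendsto
      (fun p =>
        ((1 / 2) * p ^ 2 * m₂ * (1 - q p) - (p * m₁ - 1)
            - (1 / 6) * p ^ 3 * m₃ * (1 - q p) ^ 2) / (1 - q p) ^ 2)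
      (𝓝[>] pc) (𝓝 0) := by
  have hm0 : 0 < m₁ := by linarith
  have hpc0 : 0 < pc := by rw [hpc]; positivity
  have hpc1 : pc < 1 := by rw [hpc]; rw [div_lt_one hm0]; exact h1m
  have hqt := q_tendsto ha0 ha1 hm1 h1m hpc hq
  have hg0 : Tendsto (fun p => p * (1 - q p)) (𝓝[>] pc) (𝓝 0) := by
    have h1 : Tendsto (fun p : ℝ => p) (𝓝[>] pc) (𝓝 pc) :=
      tendsto_id.mono_left nhdsWithin_le_nhds
    have h2 : Tendsto (fun p => 1 - q p) (𝓝[>] pc) (𝓝 (1 - 1)) :=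
      tendsto_const_nhds.sub hqt
    have := h1.mul h2
    simpa using this
  have hmem : ∀ᶠ p in 𝓝[>] pc, p ∈ Set.Ioc pc 1 :=
    Ioc_mem_nhdsGT_of_mem (Set.mem_Ico.2 ⟨le_rfl, hpc1⟩)
  have hgpos : ∀ᶠ p in 𝓝[>] pc, p * (1 - q p) ∈ Set.Ioi (0:ℝ) := by
    filter_upwards [hmem] with p hp
    obtain ⟨⟨hq0, hq1⟩, _⟩ := hq p hp
    have hp0 : 0 < p := lt_trans hpc0 hp.1
    exact mul_pos hp0 (by linarith)
  have hg : Tendsto (fun p => p*(1-q p)) (𝓝[>] pc) (𝓝[>] (0:ℝ)) :=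
    tendsto_nhdsWithin_iff.2 ⟨hg0, hgpos⟩
  have hcomp := (Rfun_tendsto ha0 hm3).comp hg
  have hp3 : Tendsto (fun p : ℝ => -(p^3)) (𝓝[>] pc) (𝓝 (-(pc^3))) :=
    (((continuous_pow 3).neg).tendsto pc).mono_left nhdsWithin_le_nhds
  have hmul := hp3.mul hcomp
  rw [mul_zero] at hmul
  apply hmul.congr'
  filter_upwards [hmem] with p hp
  obtain ⟨⟨hq0, hq1⟩, hfix⟩ := hq p hp
  have hp0 : 0 < p := lt_trans hpc0 hp.1
  have hε : 0 < 1 - q p := by linarith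
  have hu0 : 0 < p * (1 - q p) := mul_pos hp0 hε
  have hu1 : p * (1 - q p) ≤ 1 := by nlinarith [hp.2, mul_nonneg hp0.le hq0]
  have h1u0 : 0 ≤ 1 - p * (1 - q p) := by linarith
  have h1u1 : 1 - p * (1 - q p) ≤ 1 := by linarith
  -- HasSum for the pgf part
  have hA : HasSum (fun k => a k * (1 - p * (1 - q p)) ^ k) (q p) := by
    have h := pgf_hasSum ha0 ha1.summable h1u0 h1u1
    have he : pgf a (1 - p * (1 - q p)) = q p := by
      have harg : 1 - p * (1 - q p) = p * q p + 1 - p := by ring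
      rw [harg]; exact hfix
    rwa [he] at h
  -- HasSum for the cubic part
  have hB : HasSum (fun k : ℕ => a k * (1 - (k:ℝ)*(p * (1 - q p))
        + (k:ℝ)*((k:ℝ)-1)/2*(p * (1 - q p))^2
        - (k:ℝ)*((k:ℝ)-1)*((k:ℝ)-2)/6*(p * (1 - q p))^3))
      (1 - m₁*(p * (1 - q p)) + m₂/2*(p * (1 - q p))^2 - m₃/6*(p * (1 - q p))^3) := by
    have h := ((ha1.sub (hm1.mul_right (p * (1 - q p)))).add
        ((hm2.div_const 2).mul_right ((p * (1 - q p))^2))).sub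
        ((hm3.div_const 6).mul_right ((p * (1 - q p))^3))
    have heq : (fun k : ℕ => a k * (1 - (k:ℝ)*(p * (1 - q p))
        + (k:ℝ)*((k:ℝ)-1)/2*(p * (1 - q p))^2
        - (k:ℝ)*((k:ℝ)-1)*((k:ℝ)-2)/6*(p * (1 - q p))^3))
        = fun k : ℕ => (a k - (k:ℝ) * a k * (p * (1 - q p))
          + ((k:ℝ)*((k:ℝ)-1)*a k)/2 * ((p * (1 - q p))^2))
          - ((k:ℝ)*((k:ℝ)-1)*((k:ℝ)-2)*a k)/6 * ((p * (1 - q p))^3) := by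
      funext k; ring
    rw [heq]
    convert h using 2 <;> ring
  have hC : HasSum (fun k : ℕ => a k * ((1 - p * (1 - q p)) ^ k
        - (1 - (k:ℝ)*(p * (1 - q p)) + (k:ℝ)*((k:ℝ)-1)/2*(p * (1 - q p))^2
          - (k:ℝ)*((k:ℝ)-1)*((k:ℝ)-2)/6*(p * (1 - q p))^3)))
      (q p - (1 - m₁*(p * (1 - q p)) + m₂/2*(p * (1 - q p))^2 - m₃/6*(p * (1 - q p))^3)) := by
    have h := hA.sub hB
    have heq : (fun k : ℕ => a k * ((1 - p * (1 - q p)) ^ k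
        - (1 - (k:ℝ)*(p * (1 - q p)) + (k:ℝ)*((k:ℝ)-1)/2*(p * (1 - q p))^2
          - (k:ℝ)*((k:ℝ)-1)*((k:ℝ)-2)/6*(p * (1 - q p))^3)))
        = fun k : ℕ => a k * (1 - p * (1 - q p)) ^ k
          - a k * (1 - (k:ℝ)*(p * (1 - q p)) + (k:ℝ)*((k:ℝ)-1)/2*(p * (1 - q p))^2
          - (k:ℝ)*((k:ℝ)-1)*((k:ℝ)-2)/6*(p * (1 - q p))^3) := by
      funext k; ring
    rw [heq]
    exact h
  have hRu : Rfun a (p * (1 - q p))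
      = q p - (1 - m₁*(p * (1 - q p)) + m₂/2*(p * (1 - q p))^2 - m₃/6*(p * (1 - q p))^3) :=
    hC.tsum_eq
  have hεne : (1 - q p) ≠ 0 := ne_of_gt hε
  have hpne : p ≠ 0 := ne_of_gt hp0
  show -(p^3) * (Rfun a (p * (1 - q p)) / (p * (1 - q p))^3) = _
  rw [hRu]
  field_simp
  ring
end

section
/- As p decreases to p_c, (1 − q_p)·f_p''(q_p)/(p − p_c) converges to 2m₁; that is, the backbone generating function f̂_p(s) = (f_p((1−q_p)s + q_p) − q_p)/(1 − q_p) satisfies f̂_p''(0) = (1 − q_p) f_p''(q_p) = 2m₁(p − p_c)(1 + o(1)). -/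
/-
Write `u = p (1 - q_p)`, so that `p q_p + 1 - p = 1 - u` and the fixed-point equation reads
`1 - f(1 - u) = u / p`, i.e. `(f(1 - u) - 1 + m₁ u) / u² = (m₁ p - 1) / (p u)`.
Termwise, `((1 - u)ᵏ - 1 + k u) / u²` is a polynomial in `u` squeezed between `k - 1` and
`k (k - 1) / 2` on `(0, 1]` with value `k (k - 1) / 2` at `0`; summing against `(aₖ)`, the left side
stays `≥ m₁ - 1 > 0`, which forces `u → 0` as `p ↓ p_c`, and by dominated convergence it tends to
`m₂ / 2`. Since `f_p''(q) = p² f''(1 - u)` and `f''(1 - u) → m₂`, this gives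
`(1 - q) f_p''(q) / (p - p_c) = m₁ f''(1 - u) / ((f(1 - u) - 1 + m₁ u) / u²) → 2 m₁`.
-/

open Filter Set Topology
open scoped Topology

/-- The backbone generating function `f̂_p(s) = (f_p((1-q)s + q) - q)/(1 - q)`,
where `q = q_p` is the extinction probability. -/
noncomputable def pgfhat (a : ℕ → ℝ) (p q s : ℝ) : ℝ :=
  (pgfp a p ((1 - q) * s + q) - q) / (1 - q)

section powRem

open Finset

/-- For `u ≠ 0` this is `((1 - u) ^ k - 1 + k u) / u ^ 2`, see `sq_mul_powRem`. -/
noncomputable def powRem (k : ℕ) (u : ℝ) : ℝ := ∑ j ∈ range k, ∑ i ∈ range j, (1 - u) ^ i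

theorem sq_mul_powRem (k : ℕ) (u : ℝ) : u ^ 2 * powRem k u = k * u - 1 + (1 - u) ^ k := by
  induction k with
  | zero => simp [powRem]
  | succ k ih =>
    have hgeom := geom_sum_mul (1 - u) k
    rw [powRem, sum_range_succ, mul_add, ← powRem, ih]
    push_cast
    linear_combination (-u) * hgeom

theorem powRem_zero (k : ℕ) : powRem k 0 = k * (k - 1) / 2 := by
  induction k with
  | zero => simp [powRem]
  | succ k ih =>
    rw [powRem, sum_range_succ, ← powRem, ih]
    simp only [sub_zero, one_pow, sum_const, card_range, nsmul_eq_mul, mul_one]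
    push_cast
    ring

theorem continuous_powRem (k : ℕ) : Continuous (powRem k) := by
  unfold powRem
  fun_prop

variable {u : ℝ}

theorem powRem_nonneg (hu : u ≤ 1) (k : ℕ) : 0 ≤ powRem k u :=
  sum_nonneg fun _ _ => sum_nonneg fun i _ => pow_nonneg (sub_nonneg.2 hu) i

theorem powRem_le (hu0 : 0 ≤ u) (hu1 : u ≤ 1) (k : ℕ) : powRem k u ≤ k * (k - 1) / 2 := by
  rw [← powRem_zero]
  exact sum_le_sum fun _ _ => sum_le_sum fun i _ =>
    pow_le_pow_left₀ (sub_nonneg.2 hu1) (by linarith) i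

theorem natCast_sub_one_le_powRem (hu : u ≤ 1) (k : ℕ) : (k : ℝ) - 1 ≤ powRem k u := by
  induction k with
  | zero => simp [powRem]
  | succ k ih =>
    rw [powRem, sum_range_succ, ← powRem]
    rcases k with _ | k
    · simp [powRem]
    · have h1 : 1 ≤ ∑ i ∈ range (k + 1), (1 - u) ^ i := by
        rw [sum_range_succ']
        simpa using sum_nonneg fun i _ => pow_nonneg (sub_nonneg.2 hu) (i + 1)
      push_cast at ih ⊢
      linarith

end powRem

-- No differentiability is needed: for `c ≠ 0` the affine map is a diffeomorphism, and for `c = 0`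
-- both sides vanish.
theorem deriv_comp_mul_add (g : ℝ → ℝ) (c d : ℝ) :
    deriv (fun y => g (c * y + d)) = fun y => c * deriv g (c * y + d) := by
  funext y
  rw [deriv_comp_mul_left (f := fun z => g (z + d)), deriv_comp_add_const, smul_eq_mul]

theorem deriv_deriv_comp_mul_add (g : ℝ → ℝ) (c d : ℝ) :
    deriv (deriv fun y => g (c * y + d)) = fun y => c ^ 2 * deriv (deriv g) (c * y + d) := by
  rw [deriv_comp_mul_add, deriv_const_mul_field', deriv_comp_mul_add]
  funext y
  ring

theorem deriv_deriv_pgfp (a : ℕ → ℝ) (p : ℝ) :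
    deriv (deriv (pgfp a p)) = fun s => p ^ 2 * deriv (deriv (pgf a)) (p * s + (1 - p)) := by
  have h : pgfp a p = fun s => pgf a (p * s + (1 - p)) := by
    funext s
    rw [pgfp, add_sub_assoc]
  rw [h, deriv_deriv_comp_mul_add]

theorem deriv_deriv_pgfhat_zero (a : ℕ → ℝ) (p : ℝ) {q : ℝ} (hq : q ≠ 1) :
    deriv (deriv (pgfhat a p q)) 0 = (1 - q) * deriv (deriv (pgfp a p)) q := by
  have hq' : 1 - q ≠ 0 := sub_ne_zero.2 hq.symm
  have h : deriv (pgfhat a p q) = fun s => deriv (pgfp a p) ((1 - q) * s + q) := by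
    funext s
    rw [show pgfhat a p q = fun s => (pgfp a p ((1 - q) * s + q) - q) / (1 - q) from rfl,
      deriv_div_const, deriv_sub_const, deriv_comp_mul_add]
    field_simp
  rw [h, deriv_comp_mul_add]
  simp

theorem summable_mul_pow_of_abs_le_one {c : ℕ → ℝ} (hc : Summable c) (e : ℕ → ℕ) {x : ℝ}
    (hx : |x| ≤ 1) : Summable fun n => c n * x ^ e n :=
  hc.abs.of_norm_bounded fun n => by
    rw [Real.norm_eq_abs, abs_mul, abs_pow]
    exact mul_le_of_le_one_right (abs_nonneg _) (pow_le_one₀ (abs_nonneg x) hx)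

theorem hasDerivAt_tsum_mul_pow {c : ℕ → ℝ} {e : ℕ → ℕ} (hc : Summable c)
    (hce : Summable fun n => |c n| * e n) {x : ℝ} (hx : x ∈ Ioo (-1 : ℝ) 1) :
    HasDerivAt (fun y => ∑' n, c n * y ^ e n) (∑' n, c n * e n * x ^ (e n - 1)) x := by
  have hterm (n : ℕ) (y : ℝ) :
      HasDerivAt (fun y => c n * y ^ e n) (c n * e n * y ^ (e n - 1)) y := by
    simpa [mul_assoc] using (hasDerivAt_pow (e n) y).const_mul (c n)
  refine hasDerivAt_tsum_of_isPreconnected hce isOpen_Ioo isPreconnected_Ioo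
    (fun n y _ => hterm n y) (fun n y hy => ?_) (show (0 : ℝ) ∈ Ioo (-1) 1 by norm_num)
    (summable_mul_pow_of_abs_le_one hc e (by norm_num)) hx
  rw [Real.norm_eq_abs, abs_mul, abs_mul, abs_pow, Nat.abs_cast]
  exact mul_le_of_le_one_right (by positivity)
    (pow_le_one₀ (abs_nonneg y) (abs_lt.2 hy).le)

theorem natCast_mul_natCast_sub_one (n : ℕ) : (n : ℝ) * ((n - 1 : ℕ) : ℝ) = n * (n - 1) := by
  rcases n with _ | n <;> simp

theorem natCast_mul_sub_one_nonneg (k : ℕ) : 0 ≤ (k : ℝ) * ((k : ℝ) - 1) := by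
  rcases k with _ | k <;> push_cast <;> nlinarith

section pgf

variable {a : ℕ → ℝ} {m₁ m₂ : ℝ}

theorem deriv_deriv_pgf (ha0 : ∀ k, 0 ≤ a k) (ha : Summable a)
    (hm1 : Summable fun k : ℕ => (k : ℝ) * a k)
    (hm2 : Summable fun k : ℕ => (k : ℝ) * ((k : ℝ) - 1) * a k) {x : ℝ}
    (hx : x ∈ Ioo (-1 : ℝ) 1) :
    deriv (deriv (pgf a)) x = ∑' k : ℕ, (k : ℝ) * ((k : ℝ) - 1) * a k * x ^ (k - 2) := by
  have hD : ∀ y ∈ Ioo (-1 : ℝ) 1, HasDerivAt (pgf a) (∑' n, a n * n * y ^ (n - 1)) y :=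
    fun y hy => hasDerivAt_tsum_mul_pow (e := fun n => n) ha
      (by simpa [abs_of_nonneg (ha0 _), mul_comm] using hm1) hy
  have hD2 := hasDerivAt_tsum_mul_pow (c := fun n => a n * n) (e := fun n => n - 1)
    (by simpa [mul_comm] using hm1)
    (by simpa [abs_of_nonneg (ha0 _), mul_assoc, natCast_mul_natCast_sub_one, mul_comm] using hm2)
    hx
  have hev : deriv (pgf a) =ᶠ[𝓝 x] fun y => ∑' n, a n * n * y ^ (n - 1) :=
    eventually_of_mem (isOpen_Ioo.mem_nhds hx) fun y hy => (hD y hy).deriv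
  rw [hev.deriv_eq, hD2.deriv]
  refine tsum_congr fun n => ?_
  rw [mul_assoc (a n), natCast_mul_natCast_sub_one, Nat.sub_sub]
  ring

theorem tendsto_deriv_deriv_pgf_one_sub (ha0 : ∀ k, 0 ≤ a k) (ha : Summable a)
    (hm1 : Summable fun k : ℕ => (k : ℝ) * a k)
    (hm2 : HasSum (fun k : ℕ => (k : ℝ) * ((k : ℝ) - 1) * a k) m₂) :
    Tendsto (fun u => deriv (deriv (pgf a)) (1 - u)) (𝓝[>] 0) (𝓝 m₂) := by
  have hu : ∀ᶠ u in 𝓝[>] (0 : ℝ), u ∈ Ioo 0 1 := Ioo_mem_nhdsGT one_pos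
  have hlim : Tendsto (fun u => ∑' k : ℕ, (k : ℝ) * ((k : ℝ) - 1) * a k * (1 - u) ^ (k - 2))
      (𝓝[>] 0) (𝓝 m₂) := by
    rw [← hm2.tsum_eq]
    refine tendsto_tsum_of_dominated_convergence hm2.summable (fun k => ?_) ?_
    · have h : Continuous fun u : ℝ => (k : ℝ) * ((k : ℝ) - 1) * a k * (1 - u) ^ (k - 2) := by
        fun_prop
      simpa using (h.tendsto 0).mono_left nhdsWithin_le_nhds
    · filter_upwards [hu] with u ⟨hu0, hu1⟩ k
      have hk := mul_nonneg (natCast_mul_sub_one_nonneg k) (ha0 k)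
      rw [Real.norm_eq_abs, abs_mul, abs_of_nonneg hk, abs_pow,
        abs_of_nonneg (by linarith : (0 : ℝ) ≤ 1 - u)]
      exact mul_le_of_le_one_right hk (pow_le_one₀ (by linarith) (by linarith))
  refine hlim.congr' ?_
  filter_upwards [hu] with u ⟨hu0, hu1⟩
  rw [deriv_deriv_pgf ha0 ha hm1 hm2.summable ⟨by linarith, by linarith⟩]

theorem hasSum_mul_powRem (ha1 : HasSum a 1) (hm1 : HasSum (fun k : ℕ => (k : ℝ) * a k) m₁)
    {u : ℝ} (hu0 : 0 < u) (hu1 : u ≤ 1) :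
    HasSum (fun k => a k * powRem k u) ((m₁ * u - 1 + pgf a (1 - u)) / u ^ 2) := by
  have hpgf : HasSum (fun k => a k * (1 - u) ^ k) (pgf a (1 - u)) :=
    (summable_mul_pow_of_abs_le_one ha1.summable (fun k => k)
      (abs_le.2 ⟨by linarith, by linarith⟩)).hasSum
  refine ((((hm1.mul_right u).sub ha1).add hpgf).div_const (u ^ 2)).congr_fun fun k => ?_
  rw [eq_div_iff (by positivity)]
  linear_combination a k * sq_mul_powRem k u

theorem sub_one_le_pgf_quot (ha0 : ∀ k, 0 ≤ a k) (ha1 : HasSum a 1)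
    (hm1 : HasSum (fun k : ℕ => (k : ℝ) * a k) m₁) {u : ℝ} (hu0 : 0 < u) (hu1 : u ≤ 1) :
    m₁ - 1 ≤ (m₁ * u - 1 + pgf a (1 - u)) / u ^ 2 :=
  hasSum_le (fun k => by nlinarith [natCast_sub_one_le_powRem hu1 k, ha0 k]) (hm1.sub ha1)
    (hasSum_mul_powRem ha1 hm1 hu0 hu1)

theorem tendsto_pgf_quot (ha0 : ∀ k, 0 ≤ a k) (ha1 : HasSum a 1)
    (hm1 : HasSum (fun k : ℕ => (k : ℝ) * a k) m₁)
    (hm2 : HasSum (fun k : ℕ => (k : ℝ) * ((k : ℝ) - 1) * a k) m₂) :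
    Tendsto (fun u => (m₁ * u - 1 + pgf a (1 - u)) / u ^ 2) (𝓝[>] 0) (𝓝 (m₂ / 2)) := by
  have hu : ∀ᶠ u in 𝓝[>] (0 : ℝ), u ∈ Ioc 0 1 := Ioc_mem_nhdsGT one_pos
  have hlim : Tendsto (fun u => ∑' k, a k * powRem k u) (𝓝[>] 0) (𝓝 (m₂ / 2)) := by
    have h2 : HasSum (fun k => a k * powRem k 0) (m₂ / 2) := by
      refine (hm2.div_const 2).congr_fun fun k => ?_
      rw [powRem_zero]
      ring
    rw [← h2.tsum_eq]
    refine tendsto_tsum_of_dominated_convergence h2.summable (fun k => ?_) ?_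
    · exact (((continuous_powRem k).tendsto 0).const_mul (a k)).mono_left nhdsWithin_le_nhds
    · filter_upwards [hu] with u ⟨hu0, hu1⟩ k
      rw [Real.norm_eq_abs, abs_of_nonneg (mul_nonneg (ha0 k) (powRem_nonneg hu1 k)),
        powRem_zero]
      exact mul_le_mul_of_nonneg_left (powRem_le hu0.le hu1 k) (ha0 k)
  refine hlim.congr' ?_
  filter_upwards [hu] with u ⟨hu0, hu1⟩
  exact (hasSum_mul_powRem ha1 hm1 hu0 hu1).tsum_eq

end pgf

section extinction

variable {a : ℕ → ℝ} {m₁ p q : ℝ}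

theorem pgf_quot_eq_of_pgfp_eq (hp : 0 < p) (hq : q < 1) (hfix : pgfp a p q = q) :
    (m₁ * (p * (1 - q)) - 1 + pgf a (1 - p * (1 - q))) / (p * (1 - q)) ^ 2
      = (m₁ * p - 1) / (p * (p * (1 - q))) := by
  have hq' : 1 - q ≠ 0 := by linarith
  rw [show 1 - p * (1 - q) = p * q + 1 - p by ring, ← pgfp, hfix]
  field_simp
  ring

theorem one_sub_mul_deriv_deriv_pgfp_div_eq (hm₁ : 0 < m₁) (hp : 1 / m₁ < p) (hq : q < 1)
    (hfix : pgfp a p q = q) :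
    (1 - q) * deriv (deriv (pgfp a p)) q / (p - 1 / m₁)
      = m₁ * deriv (deriv (pgf a)) (1 - p * (1 - q))
        / ((m₁ * (p * (1 - q)) - 1 + pgf a (1 - p * (1 - q))) / (p * (1 - q)) ^ 2) := by
  have hp0 : 0 < p := (one_div_pos.2 hm₁).trans hp
  have hmp : 0 < m₁ * p - 1 := by rw [div_lt_iff₀ hm₁] at hp; linarith
  have hq' : 1 - q ≠ 0 := by linarith
  rw [pgf_quot_eq_of_pgfp_eq hp0 hq hfix, deriv_deriv_pgfp]
  dsimp only
  rw [show p * q + (1 - p) = 1 - p * (1 - q) by ring]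
  field_simp

theorem mul_one_sub_le_of_pgfp_eq (ha0 : ∀ k, 0 ≤ a k) (ha1 : HasSum a 1)
    (hm1 : HasSum (fun k : ℕ => (k : ℝ) * a k) m₁) (h1m : 1 < m₁) (hp0 : 0 < p) (hp1 : p ≤ 1)
    (hq0 : 0 ≤ q) (hq1 : q < 1) (hfix : pgfp a p q = q) :
    p * (1 - q) ≤ (m₁ * p - 1) / (p * (m₁ - 1)) := by
  have hU : 0 < p * (1 - q) := mul_pos hp0 (by linarith)
  have h := sub_one_le_pgf_quot ha0 ha1 hm1 hU (by nlinarith)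
  rw [pgf_quot_eq_of_pgfp_eq hp0 hq1 hfix, le_div_iff₀ (by positivity)] at h
  rw [le_div_iff₀ (by nlinarith)]
  linarith

end extinction

theorem tendsto_mul_one_sub_nhdsGT_zero {a : ℕ → ℝ} {m₁ : ℝ} {q : ℝ → ℝ} (ha0 : ∀ k, 0 ≤ a k)
    (ha1 : HasSum a 1) (hm1 : HasSum (fun k : ℕ => (k : ℝ) * a k) m₁) (h1m : 1 < m₁)
    (hq : ∀ p ∈ Ioc (1 / m₁) 1, q p ∈ Ico (0 : ℝ) 1 ∧ pgfp a p (q p) = q p) :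
    Tendsto (fun p => p * (1 - q p)) (𝓝[>] (1 / m₁)) (𝓝[>] 0) := by
  have hm₁ : 0 < m₁ := by linarith
  have hp : ∀ᶠ p in 𝓝[>] (1 / m₁), p ∈ Ioc (1 / m₁) 1 :=
    Ioc_mem_nhdsGT ((div_lt_one hm₁).2 h1m)
  have hbound : Tendsto (fun p => (m₁ * p - 1) / (p * (m₁ - 1))) (𝓝[>] (1 / m₁)) (𝓝 0) := by
    have h : ContinuousAt (fun p => (m₁ * p - 1) / (p * (m₁ - 1))) (1 / m₁) :=
      ContinuousAt.div (by fun_prop) (by fun_prop) (by have := sub_pos.2 h1m; positivity)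
    simpa [hm₁.ne'] using h.tendsto.mono_left nhdsWithin_le_nhds
  refine tendsto_nhdsWithin_iff.2 ⟨tendsto_of_tendsto_of_tendsto_of_le_of_le' tendsto_const_nhds
    hbound ?_ ?_, ?_⟩ <;> filter_upwards [hp] with p ⟨hpc, hp1⟩
  all_goals
    have hp0 : 0 < p := (one_div_pos.2 hm₁).trans hpc
    obtain ⟨⟨hq0, hq1⟩, hfix⟩ := hq p ⟨hpc, hp1⟩
  · exact mul_nonneg hp0.le (by linarith)
  · exact mul_one_sub_le_of_pgfp_eq ha0 ha1 hm1 h1m hp0 hp1 hq0 hq1 hfix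
  · exact mul_pos hp0 (by linarith)

theorem backbone_second_deriv_asymptotics_general
    (a : ℕ → ℝ) (m₁ m₂ pc : ℝ) (q : ℝ → ℝ)
    (ha0 : ∀ k, 0 ≤ a k) (ha1 : HasSum a 1)
    (hm1 : HasSum (fun k : ℕ => (k : ℝ) * a k) m₁) (h1m : 1 < m₁)
    (hm2 : HasSum (fun k : ℕ => (k : ℝ) * ((k : ℝ) - 1) * a k) m₂)
    (hpc : pc = 1 / m₁)
    (hq : ∀ p ∈ Set.Ioc pc 1, q p ∈ Set.Ico (0 : ℝ) 1 ∧ pgfp a p (q p) = q p) :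
    (∀ p ∈ Set.Ioc pc 1,
      deriv (deriv (pgfhat a p (q p))) 0 = (1 - q p) * deriv (deriv (pgfp a p)) (q p)) ∧
    Tendsto (fun p => (1 - q p) * deriv (deriv (pgfp a p)) (q p) / (p - pc))
      (𝓝[>] pc) (𝓝 (2 * m₁)) := by
  subst hpc
  have hm₁ : 0 < m₁ := by linarith
  refine ⟨fun p hp => deriv_deriv_pgfhat_zero a p (hq p hp).1.2.ne, ?_⟩
  have hU := tendsto_mul_one_sub_nhdsGT_zero ha0 ha1 hm1 h1m hq
  have hquot := tendsto_pgf_quot ha0 ha1 hm1 hm2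
  have hm₂ : 0 < m₂ := by
    have : m₁ - 1 ≤ m₂ / 2 := ge_of_tendsto hquot <| by
      filter_upwards [Ioc_mem_nhdsGT one_pos] with u hu
      exact sub_one_le_pgf_quot ha0 ha1 hm1 hu.1 hu.2
    linarith
  have hlim := (((tendsto_deriv_deriv_pgf_one_sub ha0 ha1.summable hm1.summable hm2).comp
    hU).const_mul m₁).div (hquot.comp hU) (by positivity)
  rw [show m₁ * m₂ / (m₂ / 2) = 2 * m₁ by field_simp] at hlim
  refine hlim.congr' ?_
  filter_upwards [Ioc_mem_nhdsGT ((div_lt_one hm₁).2 h1m)] with p hp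
  obtain ⟨⟨-, hq1⟩, hfix⟩ := hq p hp
  exact (one_sub_mul_deriv_deriv_pgfp_div_eq hm₁ hp.1 hq1 hfix).symm

/-- As `p ↓ p_c`, `(1 - q_p)·f_p''(q_p)/(p - p_c) → 2m₁`; that is, the backbone
generating function satisfies `f̂_p''(0) = (1 - q_p) f_p''(q_p) = 2m₁(p - p_c)(1 + o(1))`. -/
theorem backbone_second_deriv_asymptotics
    (a : ℕ → ℝ) (m₁ m₂ m₃ pc : ℝ) (q : ℝ → ℝ)
    (ha0 : ∀ k, 0 ≤ a k) (ha1 : HasSum a 1)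
    (hm1 : HasSum (fun k : ℕ => (k : ℝ) * a k) m₁) (h1m : 1 < m₁)
    (hm2 : HasSum (fun k : ℕ => (k : ℝ) * ((k : ℝ) - 1) * a k) m₂)
    (hm3 : HasSum (fun k : ℕ => (k : ℝ) * ((k : ℝ) - 1) * ((k : ℝ) - 2) * a k) m₃)
    (hpc : pc = 1 / m₁)
    (hq : ∀ p ∈ Set.Ioc pc 1, q p ∈ Set.Ico (0 : ℝ) 1 ∧ pgfp a p (q p) = q p) :
    (∀ p ∈ Set.Ioc pc 1,
      deriv (deriv (pgfhat a p (q p))) 0 = (1 - q p) * deriv (deriv (pgfp a p)) (q p)) ∧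
    Tendsto (fun p => (1 - q p) * deriv (deriv (pgfp a p)) (q p) / (p - pc))
      (𝓝[>] pc) (𝓝 (2 * m₁)) :=
  backbone_second_deriv_asymptotics_general a m₁ m₂ pc q ha0 ha1 hm1 h1m hm2 hpc hq
end
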